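/- arXiv:0805.2709 — 7 statements merged into one kernel-verified Lean document; each statement's English description precedes it below -/
import Mathlib

section
/- In the cops and robbers game on a finite connected graph G, if G has girth at least 5 and minimum degree at least δ, then the cop number of G is at least δ. -/
open SimpleGraph

variable {V : Type*}

/-- A strategy for `m` cops on the graph `G`: initial positions, and a move
function depending on current cop positions and the robber's position.
Each cop may stay or move to an adjacent vertex. -/
structure CopStrategy (G : SimpleGraph V) (m : ℕ) where
  init : Fin m → V
  move : (Fin m → V) → V → (Fin m → V)
  valid : ∀ c r i, move c r i = c i ∨ G.Adj (c i) (move c r i)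

/-- A strategy for the robber: an initial position chosen after seeing the cops'
initial positions, and a move function. The robber may stay or move to an
adjacent vertex. -/
structure RobberStrategy (G : SimpleGraph V) (m : ℕ) where
  init : (Fin m → V) → V
  move : (Fin m → V) → V → V
  valid : ∀ c r, move c r = r ∨ G.Adj r (move c r)

/-- The play of the game: at time `n`, `(play CS RS n).1` are the cops' positions
and `(play CS RS n).2` is the robber's position (cops move first in each round). -/
def play {G : SimpleGraph V} {m : ℕ} (CS : CopStrategy G m) (RS : RobberStrategy G m) :
    ℕ → (Fin m → V) × V
  | 0 => (CS.init, RS.init CS.init)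
  | n + 1 =>
      let p := play CS RS n
      let c := CS.move p.1 p.2
      (c, RS.move c p.2)

/-- The cops win if some cop lands on the robber's current vertex. -/
def CopsWin (G : SimpleGraph V) (m : ℕ) : Prop :=
  ∃ CS : CopStrategy G m, ∀ RS : RobberStrategy G m,
    ∃ n i, (play CS RS (n + 1)).1 i = (play CS RS n).2

/-- The cop number: the least number of cops having a winning strategy. -/
noncomputable def copNumber (G : SimpleGraph V) : ℕ := sInf {m | CopsWin G m}

section Aux

variable {G : SimpleGraph V}

lemma aux_girth_le_of_cycle {a : V} {w : G.Walk a a} (hw : w.IsCycle) : G.girth ≤ w.length := by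
  have h1 : G.egirth ≤ w.length := le_egirth.mp le_rfl a w hw
  have := ENat.toNat_le_toNat h1 (by simp)
  simpa [SimpleGraph.girth] using this

lemma aux_no_tri (hg : 5 ≤ G.girth) {a b c : V} (hab : G.Adj a b) (hbc : G.Adj b c)
    (hca : G.Adj c a) : False := by
  have hcyc : (Walk.cons hab (Walk.cons hbc (Walk.cons hca Walk.nil))).IsCycle := by
    rw [Walk.cons_isCycle_iff]
    refine ⟨?_, ?_⟩
    · rw [Walk.isPath_def]
      simp [hbc.ne, hca.ne, hca.ne.symm, hab.ne, hab.ne.symm]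
    · simp [Sym2.eq_iff, hab.ne, hbc.ne, hca.ne, hab.ne.symm, hbc.ne.symm, hca.ne.symm]
  have := aux_girth_le_of_cycle hcyc
  simp at this
  omega

lemma aux_no_four (hg : 5 ≤ G.girth) {a b c d : V} (hac : a ≠ c) (hbd : b ≠ d)
    (hab : G.Adj a b) (hbc : G.Adj b c) (hcd : G.Adj c d) (hda : G.Adj d a) : False := by
  have hcyc : (Walk.cons hab (Walk.cons hbc (Walk.cons hcd (Walk.cons hda Walk.nil)))).IsCycle := by
    rw [Walk.cons_isCycle_iff]
    refine ⟨?_, ?_⟩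
    · rw [Walk.isPath_def]
      simp [hbc.ne, hcd.ne, hbd, hbd.symm, hac, hac.symm, hda.ne, hda.ne.symm, hab.ne, hab.ne.symm]
    · simp [Sym2.eq_iff, hab.ne, hbc.ne, hcd.ne, hda.ne, hab.ne.symm, hbc.ne.symm, hcd.ne.symm,
        hda.ne.symm, hac, hac.symm, hbd, hbd.symm]
  have := aux_girth_le_of_cycle hcyc
  simp at this
  omega

/-- A vertex `q ≠ r` blocks at most one neighbour of `r`. -/
lemma aux_block (hg : 5 ≤ G.girth) {r q w1 w2 : V} (hq : q ≠ r)
    (h1 : G.Adj r w1) (h2 : G.Adj r w2)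
    (b1 : q = w1 ∨ G.Adj q w1) (b2 : q = w2 ∨ G.Adj q w2) : w1 = w2 := by
  by_contra hne
  rcases b1 with rfl | b1
  · rcases b2 with rfl | b2
    · exact hne rfl
    · exact aux_no_tri hg h1 b2 h2.symm
  · rcases b2 with rfl | b2
    · exact aux_no_tri hg h2 b1 h1.symm
    · exact aux_no_four hg (fun h => hq h.symm) hne h1 b1.symm b2 h2.symm

/-- If no cop stands on `r`, and there are fewer than `δ` cops, the robber has a
safe neighbour to move to. -/
lemma aux_escape [Fintype V] [DecidableEq V] [DecidableRel G.Adj]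
    (hg : 5 ≤ G.girth) {δ m : ℕ} (hdeg : ∀ v, δ ≤ G.degree v) (hm : m < δ)
    (p : Fin m → V) (r : V) (hp : ∀ i, p i ≠ r) :
    ∃ w, G.Adj r w ∧ ∀ i, p i ≠ w ∧ ¬ G.Adj (p i) w := by
  classical
  set N := G.neighborFinset r with hN
  set B := N.filter (fun w => ∃ i, p i = w ∨ G.Adj (p i) w) with hB
  have hsub : B ⊆ Finset.univ.biUnion
      (fun i : Fin m => N.filter (fun w => p i = w ∨ G.Adj (p i) w)) := by
    intro w hw
    rw [hB, Finset.mem_filter] at hw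
    obtain ⟨hwN, i, hi⟩ := hw
    exact Finset.mem_biUnion.mpr ⟨i, Finset.mem_univ i, Finset.mem_filter.mpr ⟨hwN, hi⟩⟩
  have hcard : B.card ≤ m := by
    calc B.card ≤ _ := Finset.card_le_card hsub
    _ ≤ ∑ i : Fin m, (N.filter (fun w => p i = w ∨ G.Adj (p i) w)).card :=
        Finset.card_biUnion_le
    _ ≤ ∑ _i : Fin m, 1 := by
        refine Finset.sum_le_sum fun i _ => Finset.card_le_one.mpr fun w1 h1 w2 h2 => ?_
        rw [Finset.mem_filter, hN, mem_neighborFinset] at h1 h2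
        exact aux_block hg (hp i) h1.1 h2.1 h1.2 h2.2
    _ = m := by simp
  have hlt : B.card < N.card := by
    have : δ ≤ N.card := by rw [hN, ← degree]; exact hdeg r
    omega
  have hns : ¬ N ⊆ B := fun h => absurd (Finset.card_le_card h) (by omega)
  obtain ⟨w, hwN, hwB⟩ := Finset.not_subset.mp hns
  refine ⟨w, (mem_neighborFinset G r w).mp hwN, fun i => ?_⟩
  rw [hB, Finset.mem_filter] at hwB
  push_neg at hwB
  exact hwB hwN i

/-- With fewer than `δ ≥ 1` cops, there is a vertex not dominated by the cops. -/
lemma aux_safe_start [Fintype V] [DecidableEq V] [DecidableRel G.Adj]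
    (hg : 5 ≤ G.girth) {δ m : ℕ} (hdeg : ∀ v, δ ≤ G.degree v) (hm : m < δ)
    (hV : Nonempty V) (p : Fin m → V) :
    ∃ r, ∀ i, p i ≠ r ∧ ¬ G.Adj (p i) r := by
  classical
  obtain ⟨v0⟩ := hV
  have hcV : m < Fintype.card V := by
    have h1 : G.degree v0 < Fintype.card V := G.degree_lt_card_verts v0
    have h2 := hdeg v0
    omega
  have himg : (Finset.univ.image p).card < (Finset.univ : Finset V).card := by
    calc (Finset.univ.image p).card ≤ (Finset.univ : Finset (Fin m)).card :=
          Finset.card_image_le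
    _ = m := by simp
    _ < _ := by simpa using hcV
  have hns : ¬ (Finset.univ : Finset V) ⊆ Finset.univ.image p :=
    fun h => absurd (Finset.card_le_card h) (by omega)
  obtain ⟨u, _, hu⟩ := Finset.not_subset.mp hns
  have hpu : ∀ i, p i ≠ u := fun i hi => hu (Finset.mem_image.mpr ⟨i, Finset.mem_univ i, hi⟩)
  obtain ⟨w, _, hw⟩ := aux_escape hg hdeg hm p u hpu
  exact ⟨w, hw⟩

end Aux

/-- If a finite connected graph has girth at least 5 and minimum degree at least `δ`,
then its cop number is at least `δ`. -/
theorem cop_number_ge_of_girth_ge_five [Fintype V] [DecidableEq V]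
    (G : SimpleGraph V) [DecidableRel G.Adj] (hconn : G.Connected)
    (δ : ℕ) (hgirth : 5 ≤ G.girth) (hdeg : ∀ v, δ ≤ G.degree v) :
    δ ≤ copNumber G := by
  classical
  have hV : Nonempty V := hconn.nonempty
  -- Step 1: any winning number of cops is at least δ.
  have key : ∀ m, CopsWin G m → δ ≤ m := by
    intro m hwin
    by_contra hlt
    push_neg at hlt
    obtain ⟨CS, hCS⟩ := hwin
    have hinit : ∀ c : Fin m → V, ∃ r, ∀ i, c i ≠ r ∧ ¬ G.Adj (c i) r :=
      fun c => aux_safe_start hgirth hdeg hlt hV c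
    have hesc : ∀ (c : Fin m → V) (r : V), (∀ i, c i ≠ r) →
        ∃ w, G.Adj r w ∧ ∀ i, c i ≠ w ∧ ¬ G.Adj (c i) w :=
      fun c r h => aux_escape hgirth hdeg hlt c r h
    let RS : RobberStrategy G m :=
      { init := fun c => (hinit c).choose
        move := fun c r => if h : ∀ i, c i ≠ r then (hesc c r h).choose else r
        valid := by
          intro c r
          by_cases h : ∀ i, c i ≠ r
          · right
            simp only [dif_pos h]
            exact (hesc c r h).choose_spec.1
          · left
            simp only [dif_neg h] }
    -- the invariant: after every round the robber is at distance ≥ 2 from all cops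
    have inv : ∀ n i, (play CS RS n).1 i ≠ (play CS RS n).2 ∧
        ¬ G.Adj ((play CS RS n).1 i) ((play CS RS n).2) := by
      intro n
      induction n with
      | zero =>
          intro i
          show CS.init i ≠ (hinit CS.init).choose ∧ _
          exact (hinit CS.init).choose_spec i
      | succ n ih =>
          set c := (play CS RS n).1 with hc
          set r := (play CS RS n).2 with hr
          have hc' : ∀ i, CS.move c r i ≠ r := by
            intro i
            rcases CS.valid c r i with h | h
            · rw [h]; exact (ih i).1
            · intro he
              exact (ih i).2 (he ▸ h)
          intro i
          have hmove : (play CS RS (n + 1)).2 = (hesc (CS.move c r) r hc').choose := by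
            show RS.move (CS.move c r) r = _
            show (if h : ∀ i, CS.move c r i ≠ r then _ else r) = _
            rw [dif_pos hc']
          have h1 : (play CS RS (n + 1)).1 = CS.move c r := rfl
          rw [h1, hmove]
          exact (hesc (CS.move c r) r hc').choose_spec.2 i
    -- but the cops were supposed to win
    obtain ⟨n, i, hcap⟩ := hCS RS
    have hc' : CS.move (play CS RS n).1 (play CS RS n).2 i ≠ (play CS RS n).2 := by
      rcases CS.valid (play CS RS n).1 (play CS RS n).2 i with h | h
      · rw [h]; exact (inv n i).1
      · intro he
        exact (inv n i).2 (he ▸ h)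
    exact hc' hcap
  -- Step 2: the cops do win with `Fintype.card V` cops, so the set is nonempty.
  have hwin : CopsWin G (Fintype.card V) := by
    refine ⟨⟨fun i => (Fintype.equivFin V).symm i, fun c _ => c, fun c r i => Or.inl rfl⟩, ?_⟩
    intro RS
    refine ⟨0, Fintype.equivFin V (RS.init fun i => (Fintype.equivFin V).symm i), ?_⟩
    show (fun i => (Fintype.equivFin V).symm i) _ = _
    simp [play]
  have hmem : copNumber G ∈ {m | CopsWin G m} := Nat.sInf_mem ⟨_, hwin⟩
  exact key _ hmem
end

section
/- Let G be the incidence graph of a finite projective plane of order q (vertices are the q^2+q+1 points and q^2+q+1 lines, with a point adjacent to a line iff the point lies on the line). Then the cop number of G is at least q+1. -/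
open SimpleGraph

variable {V : Type*}

open Configuration

/-- The incidence graph of a point-line configuration: vertices are points and lines,
with a point adjacent to a line iff the point lies on the line. -/
def incidenceGraph (P L : Type*) [Membership P L] : SimpleGraph (P ⊕ L) where
  Adj x y :=
    match x, y with
    | Sum.inl p, Sum.inr l => p ∈ l
    | Sum.inr l, Sum.inl p => p ∈ l
    | _, _ => False
  symm := by
    exact ⟨by rintro (p | l) (p' | l') h <;> simp_all⟩
  loopless := ⟨by rintro (p | l) h <;> simp_all⟩

/-!
A robber at `r` is in danger only from cops that can reach a neighbour of `r`. In a graph with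
neither triangles nor 4-cycles, a cop standing at `x ≠ r` can reach at most one neighbour of `r`
(reaching two of them would close a 3- or 4-cycle through `r`). Hence against fewer than
`δ(G)` cops the robber can always move to a vertex that no cop can reach in one move, and he
is never caught: `δ(G) ≤ c(G)` (Aigner–Fromme). The incidence graph of a projective plane of
order `q` is bipartite, `(q + 1)`-regular, and two points lie on at most one common line and two
lines meet in at most one point, so the bound applies.
-/

section CopsAndRobbers

variable {G : SimpleGraph V} {m : ℕ}

def Unguarded (G : SimpleGraph V) (c : Fin m → V) (v : V) : Prop :=
  ∀ i, ¬(c i = v ∨ G.Adj (c i) v)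

theorem CopStrategy.move_ne_of_unguarded (CS : CopStrategy G m) {c : Fin m → V} {r : V}
    (hr : Unguarded G c r) (i : Fin m) : CS.move c r i ≠ r := by
  intro h
  rcases CS.valid c r i with hi | hi
  · exact hr i (.inl (hi ▸ h))
  · exact hr i (.inr (h ▸ hi))

theorem not_copsWin_of_exists_unguarded
    (hinit : ∀ c : Fin m → V, ∃ v, Unguarded G c v)
    (hmove : ∀ (c : Fin m → V) r, (∀ i, c i ≠ r) → ∃ v, G.Adj r v ∧ Unguarded G c v) :
    ¬CopsWin G m := by
  classical
  rintro ⟨CS, hCS⟩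
  choose init hinit using hinit
  choose! escape hescape using hmove
  let RS : RobberStrategy G m :=
    { init
      move := fun c r => if ∀ i, c i ≠ r then escape c r else r
      valid := fun c r => by
        split_ifs with h
        exacts [.inr (hescape c r h).1, .inl rfl] }
  have hsafe : ∀ n, Unguarded G (play CS RS n).1 (play CS RS n).2 := by
    intro n
    induction n with
    | zero => exact hinit _
    | succ n ih =>
      have hne := CS.move_ne_of_unguarded ih
      show Unguarded G _ (if _ then _ else _)
      rw [if_pos hne]
      exact (hescape _ _ hne).2
  obtain ⟨n, i, hcaught⟩ := hCS RS
  exact CS.move_ne_of_unguarded (hsafe n) i hcaught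

theorem copsWin_card [Fintype V] (G : SimpleGraph V) : CopsWin G (Fintype.card V) := by
  let e := (Fintype.equivFin V).symm
  exact ⟨⟨e, fun c _ => c, fun _ _ _ => .inl rfl⟩,
    fun RS => ⟨0, e.symm (RS.init e), e.apply_symm_apply _⟩⟩

theorem le_copNumber_of_forall_lt_not_copsWin [Fintype V] {k : ℕ}
    (h : ∀ m < k, ¬CopsWin G m) : k ≤ copNumber G :=
  le_csInf ⟨_, copsWin_card G⟩ fun m hm => not_lt.mp fun hlt => h m hlt hm

end CopsAndRobbers

section GirthFive

variable {G : SimpleGraph V} {m : ℕ}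
  (h3 : G.CliqueFree 3) (h4 : ∀ x y, x ≠ y → (G.commonNeighbors x y).Subsingleton)
include h3 h4

theorem eq_of_adj_of_eq_or_adj {r u v x : V} (hxr : x ≠ r) (hu : G.Adj r u) (hv : G.Adj r v)
    (hxu : x = u ∨ G.Adj x u) (hxv : x = v ∨ G.Adj x v) : u = v := by
  classical
  have no_triangle : ∀ {a b c}, G.Adj a b → G.Adj a c → ¬G.Adj b c := fun hab hac hbc =>
    h3 {_, _, _} (is3Clique_triple_iff.mpr ⟨hab, hac, hbc⟩)
  rcases hxu with rfl | hxu <;> rcases hxv with rfl | hxv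
  · rfl
  · exact (no_triangle hu hv hxv).elim
  · exact (no_triangle hv hu hxu).elim
  · exact h4 r x hxr.symm (G.mem_commonNeighbors.mpr ⟨hu, hxu⟩)
      (G.mem_commonNeighbors.mpr ⟨hv, hxv⟩)

theorem exists_adj_unguarded [Fintype V] [DecidableRel G.Adj] (c : Fin m → V) {r : V}
    (hm : m < G.degree r) (hr : ∀ i, c i ≠ r) : ∃ v, G.Adj r v ∧ Unguarded G c v := by
  by_contra! h
  choose guard hguard using fun v : G.neighborSet r => not_forall_not.mp (h v v.2)
  obtain ⟨u, v, huv, hsame⟩ := Fintype.exists_ne_map_eq_of_card_lt guard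
    (by simpa only [Fintype.card_fin, card_neighborSet_eq_degree] using hm)
  have hgu := hguard u
  rw [hsame] at hgu
  exact huv (Subtype.ext (eq_of_adj_of_eq_or_adj h3 h4 (hr _) u.2 v.2 hgu (hguard v)))

theorem exists_unguarded [Fintype V] [Nonempty V] [DecidableRel G.Adj] (c : Fin m → V)
    (hm : m < G.minDegree) : ∃ v, Unguarded G c v := by
  obtain ⟨r⟩ := ‹Nonempty V›
  obtain ⟨w, hw⟩ : ∃ w, ∀ i, c i ≠ w := by
    by_contra! hsurj
    have hcard : m < Fintype.card V :=
      hm.trans ((G.minDegree_le_degree r).trans_lt (G.degree_lt_card_verts r))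
    exact hcard.not_ge (by simpa using Fintype.card_le_of_surjective c hsurj)
  obtain ⟨v, -, hv⟩ := exists_adj_unguarded h3 h4 c (hm.trans_le (G.minDegree_le_degree w)) hw
  exact ⟨v, hv⟩

theorem minDegree_le_copNumber [Fintype V] [Nonempty V] [DecidableRel G.Adj] :
    G.minDegree ≤ copNumber G :=
  le_copNumber_of_forall_lt_not_copsWin fun _ hm => not_copsWin_of_exists_unguarded
    (fun c => exists_unguarded h3 h4 c hm)
    (fun c r hr => exists_adj_unguarded h3 h4 c (hm.trans_le (G.minDegree_le_degree r)) hr)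

end GirthFive

section IncidenceGraph

variable {P L : Type*} [Membership P L]

theorem incidenceGraph_cliqueFree_three : (incidenceGraph P L).CliqueFree 3 :=
  let side : (incidenceGraph P L).Coloring Bool :=
    Coloring.mk Sum.isLeft fun {x y} hxy => by
      rcases x with _ | _ <;> rcases y with _ | _ <;> simp_all [incidenceGraph]
  side.colorable.cliqueFree (by simp)

theorem incidenceGraph_commonNeighbors_subsingleton [Nondegenerate P L] {x y : P ⊕ L}
    (hxy : x ≠ y) : ((incidenceGraph P L).commonNeighbors x y).Subsingleton := by
  intro u hu v hv
  rw [mem_commonNeighbors] at hu hv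
  rcases x with p₁ | l₁ <;> rcases y with p₂ | l₂ <;> rcases u with p | l <;>
    rcases v with p' | l' <;>
    simp_all only [ne_eq, Sum.inl.injEq, Sum.inr.injEq, reduceCtorEq, not_false_eq_true,
      incidenceGraph, and_self, false_and, and_false]
  · exact (Nondegenerate.eq_or_eq hu.1 hu.2 hv.1 hv.2).resolve_left hxy
  · exact (Nondegenerate.eq_or_eq hu.1 hv.1 hu.2 hv.2).resolve_right hxy

variable (P L) in
theorem incidenceGraph_isRegularOfDegree [Fintype P] [Fintype L] [ProjectivePlane P L]
    [DecidableRel (incidenceGraph P L).Adj] :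
    (incidenceGraph P L).IsRegularOfDegree (ProjectivePlane.order P L + 1) := by
  intro v
  rw [← card_neighborSet_eq_degree, ← Nat.card_eq_fintype_card]
  rcases v with p | l
  · have : (incidenceGraph P L).neighborSet (.inl p) = Sum.inr '' {l : L | p ∈ l} := by
      ext (_ | _) <;> simp [incidenceGraph]
    rw [this, Nat.card_image_of_injective Sum.inr_injective, ← ProjectivePlane.lineCount_eq L p]
    rfl
  · have : (incidenceGraph P L).neighborSet (.inr l) = Sum.inl '' {p : P | p ∈ l} := by
      ext (_ | _) <;> simp [incidenceGraph]
    rw [this, Nat.card_image_of_injective Sum.inl_injective, ← ProjectivePlane.pointCount_eq P l]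
    rfl

end IncidenceGraph

/-- The cop number of the incidence graph of a finite projective plane of order `q`
is at least `q + 1`. -/
theorem copNumber_incidenceGraph_projectivePlane
    (P L : Type*) [Membership P L] [Fintype P] [Fintype L]
    [ProjectivePlane P L] :
    ProjectivePlane.order P L + 1 ≤ copNumber (incidenceGraph P L) := by
  classical
  obtain ⟨p, -⟩ := ProjectivePlane.exists_config (P := P) (L := L)
  have : Nonempty (P ⊕ L) := ⟨.inl p⟩
  rw [← (incidenceGraph_isRegularOfDegree P L).minDegree_eq]
  exact minDegree_le_copNumber incidenceGraph_cliqueFree_three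
    fun _ _ => incidenceGraph_commonNeighbors_subsingleton
end

section
/- For 0 ≤ p ≤ 1 and integers k, n with k ≤ pn, the partial binomial sum satisfies Σ_{i=0}^{k} C(n,i) p^i (1-p)^{n-i} ≤ exp(-(k - pn)^2 / (2pn)). -/
/-!
Chernoff's method. For every `t ≥ 0` the indicator of `i ≤ k` is at most `exp (t (k - i))`, so by the
binomial theorem the lower tail is at most `exp (t k) (p e⁻ᵗ + 1 - p)ⁿ`. Since
`e⁻ᵗ ≤ 1 - t + t²/2` and `1 + x ≤ eˣ`, this is at most `exp (t k + p n (t²/2 - t))`, and the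
choice `t = (pn - k)/(pn)` turns the exponent into `-(k - pn)²/(2pn)`.
-/

open Finset Real

namespace Real

theorem exp_neg_le_one_sub_add_sq_div_two {t : ℝ} (ht : 0 ≤ t) :
    exp (-t) ≤ 1 - t + t ^ 2 / 2 := by
  let f : ℝ → ℝ := fun x ↦ 1 - x + x ^ 2 / 2 - exp (-x)
  have hf : ∀ x, HasDerivAt f (x - 1 + exp (-x)) x := fun x ↦ by
    refine ((((hasDerivAt_id x).const_sub 1).add ((hasDerivAt_pow 2 x).div_const 2)).sub
      (hasDerivAt_neg x).exp).congr_deriv ?_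
    norm_num
    ring
  -- `f` is monotone on the whole line because `1 - x ≤ e⁻ˣ` everywhere.
  have hmono : Monotone f := monotone_of_hasDerivAt_nonneg hf fun x ↦ by
    simp only [Pi.zero_apply]
    linarith [one_sub_le_exp_neg x]
  have hf0 : f 0 ≤ f t := hmono ht
  simp only [f, neg_zero, exp_zero] at hf0
  linarith

theorem mul_exp_neg_add_le_exp {p t : ℝ} (hp : 0 ≤ p) (ht : 0 ≤ t) :
    p * exp (-t) + (1 - p) ≤ exp (p * (t ^ 2 / 2 - t)) := by
  have hquad := exp_neg_le_one_sub_add_sq_div_two ht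
  calc p * exp (-t) + (1 - p) ≤ p * (t ^ 2 / 2 - t) + 1 := by nlinarith
    _ ≤ exp (p * (t ^ 2 / 2 - t)) := add_one_le_exp _

end Real

theorem sum_range_choose_mul_pow_le_exp_mul_pow {p q t : ℝ} (hp : 0 ≤ p) (hq : 0 ≤ q)
    (ht : 0 ≤ t) (k n : ℕ) :
    ∑ i ∈ range (k + 1), (n.choose i : ℝ) * p ^ i * q ^ (n - i) ≤
      exp (t * k) * (p * exp (-t) + q) ^ n := by
  set term : ℕ → ℝ := fun i ↦ (n.choose i : ℝ) * p ^ i * q ^ (n - i)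
  have hterm : ∀ i, 0 ≤ term i := fun i ↦ by positivity
  have hweight : ∀ i ∈ range (k + 1), term i ≤ exp (t * (k - i)) * term i := fun i hi ↦ by
    have hik : (i : ℝ) ≤ k := by exact_mod_cast Nat.lt_succ_iff.mp (mem_range.mp hi)
    exact le_mul_of_one_le_left (hterm i) (one_le_exp (mul_nonneg ht (sub_nonneg.2 hik)))
  -- The terms with `i > n` vanish, so the weighted sum may be taken over all of `range (n + 1)`.
  have hextend : ∑ i ∈ range (k + 1), exp (t * (k - i)) * term i ≤
      ∑ i ∈ range (n + 1), exp (t * (k - i)) * term i := by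
    calc _ ≤ ∑ i ∈ range (k + 1) ∪ range (n + 1), exp (t * (k - i)) * term i :=
          sum_le_sum_of_subset_of_nonneg subset_union_left fun i _ _ ↦
            mul_nonneg (exp_nonneg _) (hterm i)
      _ = _ := by
          refine (sum_subset subset_union_right fun i _ hi ↦ ?_).symm
          rw [mem_range, not_lt] at hi
          simp [term, Nat.choose_eq_zero_of_lt (Nat.lt_of_succ_le hi)]
  have hbinom : ∑ i ∈ range (n + 1), exp (t * (k - i)) * term i =
      exp (t * k) * (p * exp (-t) + q) ^ n := by
    rw [add_pow, mul_sum]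
    refine sum_congr rfl fun i _ ↦ ?_
    rw [mul_pow, ← exp_nat_mul, mul_sub, exp_sub, div_eq_mul_inv, ← exp_neg]
    simp only [term]
    ring_nf
  exact (sum_le_sum hweight).trans (hextend.trans hbinom.le)

/-- For `b = 0` both sides are `0`, by the convention `x / 0 = 0`. -/
theorem chernoff_exponent_eq (a b : ℝ) :
    (b - a) / b * a + b * (((b - a) / b) ^ 2 / 2 - (b - a) / b) = -(a - b) ^ 2 / (2 * b) := by
  rcases eq_or_ne b 0 with rfl | hb
  · simp
  · field_simp
    ring

/-- Chernoff-type lower-tail bound for the binomial distribution: for `0 ≤ p ≤ 1`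
and integers `k ≤ p·n`,
`∑_{i=0}^k C(n,i) pⁱ (1-p)^{n-i} ≤ exp(-(k - pn)² / (2pn))`. -/
theorem binomial_lower_tail (p : ℝ) (hp0 : 0 ≤ p) (hp1 : p ≤ 1) (k n : ℕ)
    (hk : (k : ℝ) ≤ p * n) :
    ∑ i ∈ Finset.range (k + 1), (n.choose i : ℝ) * p ^ i * (1 - p) ^ (n - i) ≤
      Real.exp (-((k : ℝ) - p * n) ^ 2 / (2 * p * n)) := by
  set t := (p * n - k) / (p * n)
  have ht : 0 ≤ t := div_nonneg (sub_nonneg.2 hk) (by positivity)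
  calc ∑ i ∈ range (k + 1), (n.choose i : ℝ) * p ^ i * (1 - p) ^ (n - i)
      ≤ exp (t * k) * (p * exp (-t) + (1 - p)) ^ n :=
        sum_range_choose_mul_pow_le_exp_mul_pow hp0 (sub_nonneg.2 hp1) ht k n
    _ ≤ exp (t * k) * exp (p * (t ^ 2 / 2 - t)) ^ n := by
        gcongr
        exact mul_exp_neg_add_le_exp hp0 ht
    _ = exp (t * k + p * n * (t ^ 2 / 2 - t)) := by
        rw [← exp_nat_mul, ← exp_add]
        ring_nf
    _ = exp (-((k : ℝ) - p * n) ^ 2 / (2 * p * n)) := by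
        rw [chernoff_exponent_eq, mul_assoc]
end

section
/- If c cops can win the cops and robbers game on a connected graph G under the usual rules, then 2c cops can win the modified game in which every cop is forced to move to an adjacent vertex at each turn (no cop may stay in place). -/
open SimpleGraph

variable {V : Type*}

/-- A strategy for `m` cops in the modified game in which every cop must move to an
adjacent vertex at each turn. -/
structure ForcedCopStrategy (G : SimpleGraph V) (m : ℕ) where
  init : Fin m → V
  move : (Fin m → V) → V → (Fin m → V)
  valid : ∀ c r i, G.Adj (c i) (move c r i)

/-- The play of the modified game in which cops are forced to move. -/
def forcedPlay {G : SimpleGraph V} {m : ℕ} (CS : ForcedCopStrategy G m)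
    (RS : RobberStrategy G m) : ℕ → (Fin m → V) × V
  | 0 => (CS.init, RS.init CS.init)
  | n + 1 =>
      let p := forcedPlay CS RS n
      let c := CS.move p.1 p.2
      (c, RS.move c p.2)

/-- The cops win the modified game (in which every cop must move at each turn)
if some cop lands on the robber's current vertex. -/
def ForcedCopsWin (G : SimpleGraph V) (m : ℕ) : Prop :=
  ∃ CS : ForcedCopStrategy G m, ∀ RS : RobberStrategy G m,
    ∃ n i, (forcedPlay CS RS (n + 1)).1 i = (forcedPlay CS RS n).2

attribute [local instance] Classical.propDecidable

/-- forced-game cop win rank -/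
private def FWin (G : SimpleGraph V) (M : ℕ) : ℕ → (Fin M → V) → V → Prop
  | 0, _, _ => False
  | n+1, C, r => ∃ C' : Fin M → V, (∀ j, G.Adj (C j) (C' j)) ∧
      ((∃ j, C' j = r) ∨ ∀ r', (r' = r ∨ G.Adj r r') → FWin G M n C' r')

/-- robber survival against a fixed normal strategy -/
private def Surv {G : SimpleGraph V} {c : ℕ} (CS : CopStrategy G c) :
    ℕ → (Fin c → V) → V → Prop
  | 0, _, _ => True
  | n+1, s, r => (∀ i, CS.move s r i ≠ r) ∧
      ∃ r', (r' = r ∨ G.Adj r r') ∧ Surv CS n (CS.move s r) r'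

private lemma fwinElim {G : SimpleGraph V} {M n : ℕ} {C : Fin M → V} {r : V}
    (h : FWin G M n C r) :
    ∃ C' : Fin M → V, (∀ j, G.Adj (C j) (C' j)) ∧
      ((∃ j, C' j = r) ∨ ∀ r', (r' = r ∨ G.Adj r r') → FWin G M (n-1) C' r') := by
  cases n with
  | zero => exact absurd h (by simp [FWin])
  | succ n => exact h

private noncomputable def fMove (G : SimpleGraph V) (M : ℕ) (nbr : V → V)
    (C : Fin M → V) (r : V) : Fin M → V :=
  if hh : ∃ n, FWin G M n C r then Classical.choose (fwinElim (Nat.find_spec hh))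
  else fun j => nbr (C j)

private lemma fMove_valid {G : SimpleGraph V} {M : ℕ} {nbr : V → V}
    (hnbr : ∀ v, G.Adj v (nbr v)) (C : Fin M → V) (r : V) :
    ∀ j, G.Adj (C j) (fMove G M nbr C r j) := by
  intro j
  unfold fMove
  split
  · next hh => exact (Classical.choose_spec (fwinElim (Nat.find_spec hh))).1 j
  · exact hnbr _

private lemma fMove_spec {G : SimpleGraph V} {M : ℕ} (nbr : V → V)
    {C : Fin M → V} {r : V} (hh : ∃ n, FWin G M n C r) :
    (∃ j, fMove G M nbr C r j = r) ∨
      ∀ r', (r' = r ∨ G.Adj r r') → FWin G M (Nat.find hh - 1) (fMove G M nbr C r) r' := by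
  have e : fMove G M nbr C r = Classical.choose (fwinElim (Nat.find_spec hh)) := dif_pos hh
  rw [e]
  exact (Classical.choose_spec (fwinElim (Nat.find_spec hh))).2

private noncomputable def escMove {G : SimpleGraph V} {c : ℕ} (CS : CopStrategy G c)
    (x : Fin c → V) (yy : V) : V :=
  if hh : ∃ r', (r' = yy ∨ G.Adj yy r') ∧ ∀ n, Surv CS n x r' then Classical.choose hh else yy

private lemma escMove_valid {G : SimpleGraph V} {c : ℕ} (CS : CopStrategy G c)
    (x : Fin c → V) (yy : V) : escMove CS x yy = yy ∨ G.Adj yy (escMove CS x yy) := by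
  unfold escMove
  split
  · next hh => exact (Classical.choose_spec hh).1
  · exact Or.inl rfl

private lemma escMove_spec {G : SimpleGraph V} {c : ℕ} (CS : CopStrategy G c)
    {x : Fin c → V} {yy : V}
    (hh : ∃ r', (r' = yy ∨ G.Adj yy r') ∧ ∀ n, Surv CS n x r') :
    ∀ n, Surv CS n x (escMove CS x yy) := by
  have e : escMove CS x yy = Classical.choose hh := dif_pos hh
  rw [e]
  exact (Classical.choose_spec hh).2

private def loIdx {c : ℕ} (i : Fin c) : Fin (2 * c) := ⟨i, by omega⟩
private def hiIdx {c : ℕ} (i : Fin c) : Fin (2 * c) := ⟨(i : ℕ) + c, by omega⟩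

private noncomputable def pairStep {c : ℕ} (s s' : Fin c → V)
    (C : Fin (2 * c) → V) : Fin (2 * c) → V := fun j =>
  if hj : (j : ℕ) < c then
    if s' ⟨j, hj⟩ = s ⟨j, hj⟩ then C (hiIdx ⟨j, hj⟩)
    else if C (loIdx ⟨j, hj⟩) = s ⟨j, hj⟩ then s' ⟨j, hj⟩ else s ⟨j, hj⟩
  else
    if s' ⟨(j : ℕ) - c, by omega⟩ = s ⟨(j : ℕ) - c, by omega⟩ then
      C (loIdx ⟨(j : ℕ) - c, by omega⟩)
    else if C (loIdx ⟨(j : ℕ) - c, by omega⟩) = s ⟨(j : ℕ) - c, by omega⟩ then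
      s ⟨(j : ℕ) - c, by omega⟩
    else s' ⟨(j : ℕ) - c, by omega⟩

private lemma pairStep_lo {c : ℕ} (s s' : Fin c → V) (C : Fin (2 * c) → V) (i : Fin c) :
    pairStep s s' C (loIdx i) =
      if s' i = s i then C (hiIdx i) else if C (loIdx i) = s i then s' i else s i := by
  have hj : ((loIdx i : Fin (2 * c)) : ℕ) < c := i.2
  unfold pairStep
  rw [dif_pos hj]
  rfl

private lemma pairStep_hi {c : ℕ} (s s' : Fin c → V) (C : Fin (2 * c) → V) (i : Fin c) :
    pairStep s s' C (hiIdx i) =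
      if s' i = s i then C (loIdx i) else if C (loIdx i) = s i then s i else s' i := by
  have hv : ((hiIdx i : Fin (2 * c)) : ℕ) = (i : ℕ) + c := rfl
  have hj : ¬ ((hiIdx i : Fin (2 * c)) : ℕ) < c := by omega
  unfold pairStep
  rw [dif_neg hj]
  have e : ((hiIdx i : Fin (2 * c)) : ℕ) - c = (i : ℕ) := by omega
  simp only [e, Fin.eta]

private noncomputable def initConfig {c : ℕ} (s0 : Fin c → V) (nbr : V → V) :
    Fin (2 * c) → V := fun j =>
  if hj : (j : ℕ) < c then s0 ⟨j, hj⟩ else nbr (s0 ⟨(j : ℕ) - c, by omega⟩)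

private lemma initConfig_lo {c : ℕ} (s0 : Fin c → V) (nbr : V → V) (i : Fin c) :
    initConfig s0 nbr (loIdx i) = s0 i := by
  have hj : ((loIdx i : Fin (2 * c)) : ℕ) < c := i.2
  unfold initConfig
  rw [dif_pos hj]
  rfl

private lemma initConfig_hi {c : ℕ} (s0 : Fin c → V) (nbr : V → V) (i : Fin c) :
    initConfig s0 nbr (hiIdx i) = nbr (s0 i) := by
  have hv : ((hiIdx i : Fin (2 * c)) : ℕ) = (i : ℕ) + c := rfl
  have hj : ¬ ((hiIdx i : Fin (2 * c)) : ℕ) < c := by omega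
  unfold initConfig
  rw [dif_neg hj]
  have e : ((hiIdx i : Fin (2 * c)) : ℕ) - c = (i : ℕ) := by omega
  simp only [e, Fin.eta]


/-- If `c` cops can win the usual cops-and-robbers game on a connected graph without
isolated vertices, then `2c` cops can win the modified game in which every cop is
forced to move to an adjacent vertex at each turn. -/
theorem forcedCopsWin_of_copsWin [Fintype V] (G : SimpleGraph V)
    (hconn : G.Connected) (hiso : ∀ v : V, ∃ w, G.Adj v w)
    (c : ℕ) (h : CopsWin G c) : ForcedCopsWin G (2 * c) := by
  classical
  obtain ⟨CS, hCS⟩ := h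
  choose nbr hnbr using hiso
  -- Surv is antitone
  have survDown : ∀ (n : ℕ) (s : Fin c → V) (r : V),
      Surv CS (n + 1) s r → Surv CS n s r := by
    intro n
    induction n with
    | zero => intro s r _; simp [Surv]
    | succ n ih =>
      rintro s r ⟨hA, r', hv, hs⟩
      exact ⟨hA, r', hv, ih _ _ hs⟩
  have survLe : ∀ (m n : ℕ) (s : Fin c → V) (r : V),
      n ≤ m → Surv CS m s r → Surv CS n s r := by
    intro m n s r hle
    induction hle with
    | refl => exact id
    | step _ ih => exact fun H => ih (survDown _ _ _ H)
  -- Lemma B : the robber cannot survive forever against the winning strategy CS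
  have lemB : ∀ r0 : V, ∃ N, ¬ Surv CS N CS.init r0 := by
    intro r0
    by_contra hcon
    push_neg at hcon
    have goodStep : ∀ (s : Fin c → V) (r : V), (∀ n, Surv CS n s r) →
        (∀ i, CS.move s r i ≠ r) ∧
          ∃ r', (r' = r ∨ G.Adj r r') ∧ ∀ n, Surv CS n (CS.move s r) r' := by
      intro s r hg
      have h1 : ∀ i, CS.move s r i ≠ r := by
        have := hg 1
        simp only [Surv] at this
        exact this.1
      refine ⟨h1, ?_⟩
      have hsel : ∀ n, ∃ r', (r' = r ∨ G.Adj r r') ∧ Surv CS n (CS.move s r) r' := by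
        intro n
        have := hg (n + 1)
        simp only [Surv] at this
        exact this.2
      choose f hf1 hf2 using hsel
      obtain ⟨y, hy⟩ := Finite.exists_infinite_fiber f
      have hyI : (f ⁻¹' {y}).Infinite := Set.infinite_coe_iff.mp hy
      refine ⟨y, ?_, ?_⟩
      · obtain ⟨m, hm⟩ := hyI.nonempty
        have hfm : f m = y := hm
        exact hfm ▸ hf1 m
      · intro n
        obtain ⟨m, hm, hlt⟩ := hyI.exists_gt n
        have hfm : f m = y := hm
        exact survLe m n _ _ (Nat.le_of_lt hlt) (hfm ▸ hf2 m)
    -- the escaping robber strategy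
    let RS : RobberStrategy G c :=
      ⟨fun _ => r0, escMove CS, fun x yy => escMove_valid CS x yy⟩
    have inv : ∀ n k, Surv CS k (play CS RS n).1 (play CS RS n).2 := by
      intro n
      induction n with
      | zero =>
        intro k
        exact hcon k
      | succ n ihn =>
        intro k
        obtain ⟨hA, hEx⟩ := goodStep _ _ ihn
        have hm1 : (play CS RS (n + 1)).1 = CS.move (play CS RS n).1 (play CS RS n).2 := rfl
        have hm2 : (play CS RS (n + 1)).2
            = escMove CS (play CS RS (n + 1)).1 (play CS RS n).2 := rfl
        have hcond : ∃ r', (r' = (play CS RS n).2 ∨ G.Adj (play CS RS n).2 r') ∧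
            ∀ m, Surv CS m ((play CS RS (n + 1)).1) r' := by
          rw [hm1]; exact hEx
        rw [hm2]
        exact escMove_spec CS hcond k
    obtain ⟨n, i, hcapt⟩ := hCS RS
    have h1 := inv n 1
    simp only [Surv] at h1
    exact h1.1 i hcapt
  -- Lemma C : simulation, pairs of forced cops track the normal cops
  have lemC : ∀ (n : ℕ) (s : Fin c → V) (r : V) (C : Fin (2 * c) → V),
      (∀ i : Fin c, (C (loIdx i) = s i ∧ G.Adj (s i) (C (hiIdx i))) ∨
        (C (hiIdx i) = s i ∧ G.Adj (s i) (C (loIdx i)))) →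
      ¬ Surv CS n s r → FWin G (2 * c) n C r := by
    intro n
    induction n with
    | zero => intro s r C _ hns; exact absurd (by simp [Surv]) hns
    | succ n ih =>
      intro s r C henc hns
      have hvalid : ∀ j, G.Adj (C j) (pairStep s (CS.move s r) C j) := by
        intro j
        by_cases hj : (j : ℕ) < c
        · have hjj : j = loIdx (⟨(j : ℕ), hj⟩ : Fin c) := rfl
          rw [hjj, pairStep_lo]
          set i : Fin c := ⟨(j : ℕ), hj⟩
          by_cases hss : CS.move s r i = s i
          · rw [if_pos hss]
            rcases henc i with ⟨h1, h2⟩ | ⟨h1, h2⟩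
            · rw [h1]; exact h2
            · rw [h1]; exact h2.symm
          · rw [if_neg hss]
            by_cases hlo : C (loIdx i) = s i
            · rw [if_pos hlo, hlo]
              exact ((CS.valid s r i).resolve_left hss).symm |>.symm
            · rw [if_neg hlo]
              rcases henc i with ⟨h1, h2⟩ | ⟨h1, h2⟩
              · exact absurd h1 hlo
              · exact h2.symm
        · have hjj : j = hiIdx (⟨(j : ℕ) - c, by omega⟩ : Fin c) := by
            apply Fin.ext
            show (j : ℕ) = (j : ℕ) - c + c
            omega
          rw [hjj, pairStep_hi]
          set i : Fin c := ⟨(j : ℕ) - c, by omega⟩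
          by_cases hss : CS.move s r i = s i
          · rw [if_pos hss]
            rcases henc i with ⟨h1, h2⟩ | ⟨h1, h2⟩
            · rw [h1]; exact h2.symm
            · rw [h1]; exact h2
          · rw [if_neg hss]
            by_cases hlo : C (loIdx i) = s i
            · rw [if_pos hlo]
              rcases henc i with ⟨h1, h2⟩ | ⟨h1, h2⟩
              · exact h2.symm
              · exact absurd hlo h2.ne'
            · rw [if_neg hlo]
              rcases henc i with ⟨h1, h2⟩ | ⟨h1, h2⟩
              · exact absurd h1 hlo
              · rw [h1]; exact (CS.valid s r i).resolve_left hss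
      by_cases hcap : ∃ i, CS.move s r i = r
      · show FWin G (2 * c) (n + 1) C r
        refine ⟨pairStep s (CS.move s r) C, hvalid, Or.inl ?_⟩
        obtain ⟨i, hi⟩ := hcap
        by_cases hss : CS.move s r i = s i
        · rcases henc i with ⟨h1, h2⟩ | ⟨h1, h2⟩
          · refine ⟨hiIdx i, ?_⟩
            rw [pairStep_hi, if_pos hss, h1, ← hss]
            exact hi
          · refine ⟨loIdx i, ?_⟩
            rw [pairStep_lo, if_pos hss, h1, ← hss]
            exact hi
        · rcases henc i with ⟨h1, h2⟩ | ⟨h1, h2⟩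
          · refine ⟨loIdx i, ?_⟩
            rw [pairStep_lo, if_neg hss, if_pos h1]
            exact hi
          · have hne : ¬ C (loIdx i) = s i := fun he => (h2.ne) he.symm
            refine ⟨hiIdx i, ?_⟩
            rw [pairStep_hi, if_neg hss, if_neg hne]
            exact hi
      · have hB : ∀ r', (r' = r ∨ G.Adj r r') → ¬ Surv CS n (CS.move s r) r' := by
          intro r' hv hsv
          exact hns ⟨fun i hi => hcap ⟨i, hi⟩, r', hv, hsv⟩
        show FWin G (2 * c) (n + 1) C r
        refine ⟨pairStep s (CS.move s r) C, hvalid, Or.inr ?_⟩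
        intro r' hv
        refine ih (CS.move s r) r' (pairStep s (CS.move s r) C) ?_ (hB r' hv)
        intro i
        by_cases hss : CS.move s r i = s i
        · rcases henc i with ⟨h1, h2⟩ | ⟨h1, h2⟩
          · refine Or.inr ⟨?_, ?_⟩
            · rw [pairStep_hi, if_pos hss, h1]; exact hss.symm
            · rw [pairStep_lo, if_pos hss, hss]; exact h2
          · refine Or.inl ⟨?_, ?_⟩
            · rw [pairStep_lo, if_pos hss, h1]; exact hss.symm
            · rw [pairStep_hi, if_pos hss, hss]; exact h2
        · rcases henc i with ⟨h1, h2⟩ | ⟨h1, h2⟩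
          · refine Or.inl ⟨?_, ?_⟩
            · rw [pairStep_lo, if_neg hss, if_pos h1]
            · rw [pairStep_hi, if_neg hss, if_pos h1]
              exact ((CS.valid s r i).resolve_left hss).symm
          · have hne : ¬ C (loIdx i) = s i := fun he => (h2.ne) he.symm
            refine Or.inr ⟨?_, ?_⟩
            · rw [pairStep_hi, if_neg hss, if_neg hne]
            · rw [pairStep_lo, if_neg hss, if_neg hne]
              exact ((CS.valid s r i).resolve_left hss).symm
  -- the forced strategy
  let CSF : ForcedCopStrategy G (2 * c) :=
    ⟨initConfig CS.init nbr, fMove G (2 * c) nbr, fun C r j => fMove_valid hnbr C r j⟩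
  refine ⟨CSF, ?_⟩
  intro RS
  -- descent lemma
  have L : ∀ (k k' : ℕ), k' ≤ k → ∀ n,
      FWin G (2 * c) k' (forcedPlay CSF RS n).1 (forcedPlay CSF RS n).2 →
      ∃ m j, (forcedPlay CSF RS (m + 1)).1 j = (forcedPlay CSF RS m).2 := by
    intro k
    induction k with
    | zero =>
      intro k' hk' n hw
      interval_cases k'
      exact absurd hw (by simp [FWin])
    | succ k ihk =>
      intro k' hk' n hw
      cases k' with
      | zero => exact absurd hw (by simp [FWin])
      | succ k'' =>
        have hex : ∃ k0, FWin G (2 * c) k0 (forcedPlay CSF RS n).1 (forcedPlay CSF RS n).2 :=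
          ⟨k'' + 1, hw⟩
        have hmv : (forcedPlay CSF RS (n + 1)).1
            = fMove G (2 * c) nbr (forcedPlay CSF RS n).1 (forcedPlay CSF RS n).2 := rfl
        rcases fMove_spec nbr hex with hcapt | hnext
        · obtain ⟨j, hj⟩ := hcapt
          exact ⟨n, j, by rw [hmv]; exact hj⟩
        · have h1 : 0 < Nat.find hex := (Nat.find_pos hex).mpr (by simp [FWin])
          have h2 : Nat.find hex ≤ k'' + 1 := Nat.find_min' hex hw
          have hv := RS.valid (forcedPlay CSF RS (n + 1)).1 (forcedPlay CSF RS n).2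
          have hnx : FWin G (2 * c) (Nat.find hex - 1)
              (forcedPlay CSF RS (n + 1)).1 (forcedPlay CSF RS (n + 1)).2 := by
            have hm2 : (forcedPlay CSF RS (n + 1)).2
                = RS.move (forcedPlay CSF RS (n + 1)).1 (forcedPlay CSF RS n).2 := rfl
            rw [hm2, hmv]
            exact hnext _ (by rw [← hmv]; exact hv)
          exact ihk (Nat.find hex - 1) (by omega) (n + 1) hnx
  -- initial position
  obtain ⟨N, hN⟩ := lemB (RS.init CSF.init)
  have hEnc0 : ∀ i : Fin c,
      (initConfig CS.init nbr (loIdx i) = CS.init i ∧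
        G.Adj (CS.init i) (initConfig CS.init nbr (hiIdx i))) ∨
      (initConfig CS.init nbr (hiIdx i) = CS.init i ∧
        G.Adj (CS.init i) (initConfig CS.init nbr (loIdx i))) := by
    intro i
    refine Or.inl ⟨initConfig_lo _ _ _, ?_⟩
    rw [initConfig_hi]
    exact hnbr _
  have h0 : FWin G (2 * c) N (forcedPlay CSF RS 0).1 (forcedPlay CSF RS 0).2 :=
    lemC N CS.init (RS.init CSF.init) (initConfig CS.init nbr) hEnc0 hN
  exact L N N le_rfl 0 h0
end

section
/- In a graph H that is obtained from a tree by adding at most m extra edges, the number of non-backtracking walks of a fixed length k between any two fixed vertices is at most (1+2m)^k. -/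
open SimpleGraph

/-- A walk is non-backtracking if it never immediately retraces an edge,
i.e. the vertex two steps later always differs from the current one. -/
def NonBacktracking {V : Type*} {H : SimpleGraph V} {u v : V} (w : H.Walk u v) : Prop :=
  ∀ i : ℕ, i + 2 ≤ w.length → w.getVert (i + 2) ≠ w.getVert i

/-!
Record each step of a walk in `H` as `none` if it runs along the tree `T` and as the directed
edge itself otherwise. In a tree, non-backtracking walks are paths, hence unique between their
endpoints; so cutting two non-backtracking walks with the same record at a common non-tree step
and inducting on the length shows that the record and the endpoints determine the walk. A walk
of length `k` has a record in `(Option D)^k`, where `D`, the set of darts of `H \ T`, has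
`2 * #(E(H) \ E(T)) ≤ 2m` elements.
-/

namespace SimpleGraph

variable {V : Type*} {G : SimpleGraph V}

theorem Walk.getVert_transfer {K : SimpleGraph V} {u v : V} (p : G.Walk u v) (hp) (n : ℕ) :
    (p.transfer K hp).getVert n = p.getVert n := by
  induction p generalizing n with
  | nil => simp
  | cons h p ih =>
    cases n
    · simp
    · exact ih _ _

theorem Walk.support_take_append_support_drop_succ {u v : V} (p : G.Walk u v) {n : ℕ}
    (hn : n < p.length) : (p.take n).support ++ (p.drop (n + 1)).support = p.support := by
  rw [support_take, drop_support_eq_support_drop_min, min_eq_left (by omega),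
    List.take_append_drop]

theorem natCard_dart_eq_two_mul_ncard_edgeSet [Finite V] (G : SimpleGraph V) :
    Nat.card G.Dart = 2 * G.edgeSet.ncard := by
  classical
  have := Fintype.ofFinite V
  rw [Nat.card_eq_fintype_card, dart_card_eq_twice_card_edges, ← Set.ncard_coe_finset,
    coe_edgeFinset]

end SimpleGraph

namespace NonBacktracking

open SimpleGraph Walk

variable {V : Type*} {G : SimpleGraph V} {u v : V}

theorem of_cons {w : V} {h : G.Adj u w} {p : G.Walk w v} (hp : NonBacktracking (cons h p)) :
    NonBacktracking p := fun i hi => by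
  simpa using hp (i + 1) (by simp; omega)

theorem take {p : G.Walk u v} (hp : NonBacktracking p) (n : ℕ) :
    NonBacktracking (p.take n) := fun i hi => by
  simp only [take_length] at hi
  simp only [take_getVert, min_eq_right (by omega : i + 2 ≤ n), min_eq_right (by omega : i ≤ n)]
  exact hp i (by omega)

theorem drop {p : G.Walk u v} (hp : NonBacktracking p) (n : ℕ) :
    NonBacktracking (p.drop n) := fun i hi => by
  simp only [drop_length] at hi
  simpa only [drop_getVert, add_assoc] using hp (n + i) (by omega)

theorem transfer {K : SimpleGraph V} {p : G.Walk u v} (hp : NonBacktracking p) (hK) :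
    NonBacktracking (p.transfer K hK) := fun i hi => by
  simpa only [getVert_transfer] using hp i (by simpa using hi)

theorem isPath (hG : G.IsAcyclic) {p : G.Walk u v} (hp : NonBacktracking p) : p.IsPath := by
  induction p with
  | nil => exact .nil
  | @cons u w v h q ih =>
    have hq := ih hp.of_cons
    refine hq.cons fun hu => ?_
    have hsnd : u = q.snd := hG.eq_snd_of_adj_start hq h.symm hu
    cases q with
    | nil => exact h.ne (by simpa using hu)
    | cons => exact hp 0 (by simp) (by simp [hsnd])

theorem eq_of_isAcyclic (hG : G.IsAcyclic) {p q : G.Walk u v} (hp : NonBacktracking p)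
    (hq : NonBacktracking q) : p = q :=
  congrArg Subtype.val ((hG.subsingleton_path u v).elim ⟨p, hp.isPath hG⟩ ⟨q, hq.isPath hG⟩)

end NonBacktracking

namespace SimpleGraph

open Walk

variable {V : Type*} {H : SimpleGraph V} (T : SimpleGraph V)

open Classical in
noncomputable def nonTreeDart (d : H.Dart) : Option (H \ T).Dart :=
  if h : T.Adj d.fst d.snd then none else some ⟨d.toProd, d.adj, h⟩

noncomputable def Walk.nonTreeCode {u v : V} (p : H.Walk u v) : List (Option (H \ T).Dart) :=
  p.darts.map (nonTreeDart T)

variable {T}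

theorem nonTreeDart_eq_none_iff {d : H.Dart} : nonTreeDart T d = none ↔ T.Adj d.fst d.snd := by
  unfold nonTreeDart
  split_ifs with h <;> simp [h]

@[simp]
theorem Walk.length_nonTreeCode {u v : V} (p : H.Walk u v) :
    (p.nonTreeCode T).length = p.length := by
  simp [nonTreeCode]

theorem Walk.nonTreeCode_take {u v : V} (p : H.Walk u v) (n : ℕ) :
    (p.take n).nonTreeCode T = (p.nonTreeCode T).take n := by
  simp [nonTreeCode, darts_take, List.map_take]

theorem Walk.nonTreeCode_drop {u v : V} (p : H.Walk u v) (n : ℕ) :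
    (p.drop n).nonTreeCode T = (p.nonTreeCode T).drop n := by
  simp [nonTreeCode, darts_drop, List.map_drop]

theorem Walk.getVert_eq_of_nonTreeCode_getElem? {u v : V} {p : H.Walk u v} {j : ℕ}
    {d : (H \ T).Dart} (h : (p.nonTreeCode T)[j]? = some (some d)) :
    (p.getVert j, p.getVert (j + 1)) = d.toProd := by
  obtain ⟨hj, hd⟩ := List.getElem?_eq_some_iff.mp h
  simp only [nonTreeCode, List.getElem_map, darts_getElem_eq_getVert, nonTreeDart] at hd
  split_ifs at hd
  cases hd
  rfl

theorem Walk.edges_subset_edgeSet_of_nonTreeCode {u v : V} {p : H.Walk u v}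
    (hp : ∀ x ∈ p.nonTreeCode T, x = none) : ∀ e ∈ p.edges, e ∈ T.edgeSet := by
  simp only [edges, List.mem_map]
  rintro _ ⟨d, hd, rfl⟩
  exact nonTreeDart_eq_none_iff.mp (hp _ (List.mem_map_of_mem hd))

/- The endpoints are only required to be propositionally equal, so that the induction hypothesis
applies to the pieces `p.take j` and `p.drop (j + 1)`, whose endpoints are `getVert`s. -/
theorem Walk.support_eq_of_nonTreeCode_eq (hT : T.IsAcyclic) {u v u' v' : V} {p : H.Walk u v}
    {q : H.Walk u' v'} (hu : u = u') (hv : v = v') (hp : NonBacktracking p)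
    (hq : NonBacktracking q) (h : p.nonTreeCode T = q.nonTreeCode T) :
    p.support = q.support := by
  induction hn : p.length using Nat.strong_induction_on generalizing u v u' v' with
  | _ n ih =>
  subst hu hv
  by_cases htree : ∀ x ∈ p.nonTreeCode T, x = none
  · have hpT := edges_subset_edgeSet_of_nonTreeCode htree
    have hqT := edges_subset_edgeSet_of_nonTreeCode (h ▸ htree)
    have := (hp.transfer hpT).eq_of_isAcyclic hT (hq.transfer hqT)
    simpa using congrArg Walk.support this
  push Not at htree
  obtain ⟨_, hx, hd⟩ := htree
  obtain ⟨d, rfl⟩ := Option.ne_none_iff_exists'.mp hd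
  obtain ⟨j, hj, hjd⟩ := List.getElem_of_mem hx
  have hjp := getVert_eq_of_nonTreeCode_getElem? (List.getElem?_eq_some_iff.mpr ⟨hj, hjd⟩)
  have hjq := getVert_eq_of_nonTreeCode_getElem? (h ▸ List.getElem?_eq_some_iff.mpr ⟨hj, hjd⟩)
  have hjlen : j < p.length := by simpa using hj
  have hqlen : q.length = p.length := by simpa using congrArg List.length h.symm
  have hpre := ih j (hn ▸ hjlen) (p := p.take j) (q := q.take j) rfl
    (congrArg Prod.fst (hjp.trans hjq.symm)) (hp.take j) (hq.take j)
    (by rw [nonTreeCode_take, nonTreeCode_take, h]) (by simp; omega)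
  have hsuf := ih (n - (j + 1)) (by omega) (p := p.drop (j + 1)) (q := q.drop (j + 1))
    (congrArg Prod.snd (hjp.trans hjq.symm)) rfl (hp.drop (j + 1)) (hq.drop (j + 1))
    (by rw [nonTreeCode_drop, nonTreeCode_drop, h]) (by simp; omega)
  rw [← p.support_take_append_support_drop_succ hjlen,
    ← q.support_take_append_support_drop_succ (hqlen ▸ hjlen), hpre, hsuf]

end SimpleGraph

theorem nonBacktracking_walks_le_general {V : Type*} [Fintype V] (H T : SimpleGraph V)
    (hT : T.IsTree) (m : ℕ) (hm : (H.edgeSet \ T.edgeSet).ncard ≤ m)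
    (u v : V) (k : ℕ) :
    Nat.card {w : H.Walk u v // w.length = k ∧ NonBacktracking w} ≤ (1 + 2 * m) ^ k := by
  classical
  let code (w : {w : H.Walk u v // w.length = k ∧ NonBacktracking w}) :
      List.Vector (Option (H \ T).Dart) k :=
    ⟨w.1.nonTreeCode T, by simp [w.2.1]⟩
  have hcode : Function.Injective code := fun p q hpq => Subtype.ext <| Walk.ext_support <|
    Walk.support_eq_of_nonTreeCode_eq hT.isAcyclic rfl rfl p.2.2 q.2.2 (congrArg Subtype.val hpq)
  calc Nat.card {w : H.Walk u v // w.length = k ∧ NonBacktracking w}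
      ≤ Nat.card (List.Vector (Option (H \ T).Dart) k) := Nat.card_le_card_of_injective code hcode
    _ = (1 + 2 * (H.edgeSet \ T.edgeSet).ncard) ^ k := by
      rw [Nat.card_congr (Equiv.vectorEquivFin _ k), Nat.card_fun, Nat.card_fin,
        Finite.card_option, natCard_dart_eq_two_mul_ncard_edgeSet, edgeSet_sdiff, add_comm]
    _ ≤ (1 + 2 * m) ^ k := by gcongr

/-- In a graph `H` obtained from a (spanning) tree by adding at most `m` extra edges,
the number of non-backtracking walks of any fixed length `k` between two fixed
vertices is at most `(1 + 2m)^k`. -/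
theorem nonBacktracking_walks_le {V : Type*} [Fintype V] (H T : SimpleGraph V)
    (hT : T.IsTree) (hle : T ≤ H) (m : ℕ) (hm : (H.edgeSet \ T.edgeSet).ncard ≤ m)
    (u v : V) (k : ℕ) :
    Nat.card {w : H.Walk u v // w.length = k ∧ NonBacktracking w} ≤ (1 + 2 * m) ^ k :=
  nonBacktracking_walks_le_general H T hT m hm u v k
end

section
/- Let G be a finite connected graph, r : G → G a retraction with image R = r(G), and suppose the robber is at vertex x. If a cop occupies r(x) and thereafter, whenever the robber moves to a vertex x', the cop moves to r(x'), then this is a valid cop strategy (r(x') is equal to or adjacent to r(x)), and whenever the robber enters R he is immediately caught. -/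
open SimpleGraph

/-- The area-defending strategy of a single cop following a retraction `r`: if the
robber walks along `x 0, x 1, x 2, …` (staying or moving to adjacent vertices) and
the cop occupies `r (x n)` at each time, then each cop move is legal (`r (x (n+1))`
equals or is adjacent to `r (x n)`), and whenever the robber enters the retract
`R = r(G)` he is immediately caught (the cop stands on the robber's vertex). -/
theorem retract_defending_strategy {V : Type*} [Fintype V] (G : SimpleGraph V)
    (hconn : G.Connected) (r : V → V)
    (hhom : ∀ u v, G.Adj u v → r u = r v ∨ G.Adj (r u) (r v))
    (hidem : r ∘ r = r)
    (x : ℕ → V) (hx : ∀ n, x (n + 1) = x n ∨ G.Adj (x n) (x (n + 1))) :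
    ∀ n, (r (x (n + 1)) = r (x n) ∨ G.Adj (r (x n)) (r (x (n + 1)))) ∧
      (x (n + 1) ∈ Set.range r → r (x (n + 1)) = x (n + 1)) := by
  intro n
  constructor
  · rcases hx n with h | h
    · left; rw [h]
    · rcases hhom _ _ h with h' | h'
      · left; exact h'.symm
      · right; exact h'
  · rintro ⟨y, hy⟩
    rw [← hy]
    exact congrFun hidem y
end

section
/- (Harper's edge-isoperimetric consequence) For every subset S of the vertex set of the d-dimensional hypercube Q with |S| ≤ 2^(d-1), the number of edges of Q with exactly one endpoint in S is at least |S|. -/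
/-! Canonical path counting. For `x ∈ S` and `y ∉ S`, the path from `x` to `y` that switches
the coordinates one at a time, from left to right, leaves `S` along a boundary edge. An edge
in direction `i` lies on the path of at most `2 ^ (d - 1)` pairs `(x, y)`, since such a pair
is determined by the coordinates of `x` before `i` and those of `y` after `i`. Hence
`|S| |Sᶜ| ≤ 2 ^ (d - 1) |∂S|`, and `|Sᶜ| ≥ 2 ^ (d - 1)` gives `|∂S| ≥ |S|`. -/

open Finset

/-- The `d`-dimensional hypercube graph on `{0,1}^d`: two vertices are adjacent
iff they differ in exactly one coordinate. -/
def hypercube (d : ℕ) : SimpleGraph (Fin d → Bool) where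
  Adj x y := (Finset.univ.filter fun i => x i ≠ y i).card = 1
  symm := ⟨by
    intro x y h
    simpa [ne_comm] using h⟩
  loopless := ⟨by intro x h; simp at h⟩

instance {d : ℕ} : DecidableRel (hypercube d).Adj := fun x y =>
  decEq _ _

namespace Hypercube

variable {α : Type*} {d : ℕ}

def canonicalPath (x y : Fin d → α) (k : ℕ) : Fin d → α :=
  fun j => if (j : ℕ) < k then y j else x j

lemma canonicalPath_zero (x y : Fin d → α) : canonicalPath x y 0 = x := by
  funext j; simp [canonicalPath]

lemma canonicalPath_of_le (x y : Fin d → α) {k : ℕ} (hk : d ≤ k) : canonicalPath x y k = y := by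
  funext j; simp [canonicalPath, j.isLt.trans_le hk]

lemma canonicalPath_succ_apply_of_ne (x y : Fin d → α) {k : ℕ} {j : Fin d} (hj : (j : ℕ) ≠ k) :
    canonicalPath x y (k + 1) j = canonicalPath x y k j := by
  have hjk : (j : ℕ) < k + 1 ↔ (j : ℕ) < k := by omega
  simp only [canonicalPath, hjk]

lemma canonicalPath_succ_apply_self (x y : Fin d → α) (k : Fin d) :
    canonicalPath x y (k + 1) k = y k := by
  simp [canonicalPath]

lemma val_eq_of_canonicalPath_succ_apply_ne {x y : Fin d → α} {k : ℕ} {i : Fin d}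
    (h : canonicalPath x y k i ≠ canonicalPath x y (k + 1) i) : (i : ℕ) = k := by
  by_contra hik
  exact h (canonicalPath_succ_apply_of_ne x y hik).symm

lemma canonicalPath_canonicalPath (x y : Fin d → α) (k : ℕ) :
    canonicalPath (canonicalPath x y k) (canonicalPath y x k) k = x := by
  funext j; by_cases hj : (j : ℕ) < k <;> simp [canonicalPath, hj]

lemma exists_canonicalPath_step {S : Finset (Fin d → α)} {x y : Fin d → α}
    (hx : x ∈ S) (hy : y ∉ S) :
    ∃ k : Fin d, canonicalPath x y k ∈ S ∧ canonicalPath x y (k + 1) ∉ S := by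
  have hstep : ∃ k, canonicalPath x y k ∈ S ∧ canonicalPath x y (k + 1) ∉ S := by
    by_contra! h
    exact hy (canonicalPath_of_le x y le_rfl ▸
      Nat.rec (motive := fun n => canonicalPath x y n ∈ S) (canonicalPath_zero x y ▸ hx) h d)
  obtain ⟨k, hkS, hk1S⟩ := hstep
  have hkd : k < d := by
    by_contra! hkd
    rw [canonicalPath_of_le x y hkd] at hkS
    rw [canonicalPath_of_le x y (by omega)] at hk1S
    exact hk1S hkS
  exact ⟨⟨k, hkd⟩, hkS, hk1S⟩

variable [Fintype α] [DecidableEq α]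

def pathsThrough (u v : Fin d → α) : Finset ((Fin d → α) × (Fin d → α)) :=
  univ.filter fun p => ∃ k : Fin d,
    canonicalPath p.1 p.2 k = u ∧ canonicalPath p.1 p.2 (k + 1) = v

lemma card_pathsThrough_le {u v : Fin d → α} {i : Fin d} (hi : u i ≠ v i) :
    #(pathsThrough u v) ≤ Fintype.card α ^ (d - 1) := by
  have hcut : ∀ p ∈ pathsThrough u v,
      canonicalPath p.1 p.2 i = u ∧ canonicalPath p.1 p.2 (i + 1) = v := by
    intro p hp
    obtain ⟨k, hku, hkv⟩ := (mem_filter.mp hp).2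
    have hki : k = i := Fin.ext (val_eq_of_canonicalPath_succ_apply_ne (hku ▸ hkv ▸ hi)).symm
    exact hki ▸ ⟨hku, hkv⟩
  -- swapping the tails of `x` and `y` at `i` is an involution
  have hrecover : ∀ p ∈ pathsThrough u v,
      p = (canonicalPath u (canonicalPath p.2 p.1 i) i,
        canonicalPath (canonicalPath p.2 p.1 i) u i) := by
    intro p hp
    rw [← (hcut p hp).1, canonicalPath_canonicalPath, canonicalPath_canonicalPath]
  calc #(pathsThrough u v)
      ≤ #(univ.filter fun h : Fin d → α => h i = v i) := by
        refine card_le_card_of_injOn (fun p => canonicalPath p.2 p.1 i) (fun p hp => ?_) ?_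
        · rw [mem_coe, mem_filter, ← (hcut p hp).2, canonicalPath_succ_apply_self]
          simp [canonicalPath]
        · intro p hp q hq hpq
          calc p = _ := hrecover p hp
            _ = _ := by rw [show canonicalPath p.2 p.1 i = canonicalPath q.2 q.1 i from hpq]
            _ = q := (hrecover q hq).symm
    _ = Fintype.card α ^ (d - 1) := by
        simpa [Fintype.piFinset_univ] using
          Fintype.card_filter_piFinset_const_eq_of_mem (univ : Finset α) i (mem_univ (v i))

end Hypercube

open Hypercube

lemma hypercube_adj_of_forall_ne_apply_eq {d : ℕ} {u v : Fin d → Bool} {i : Fin d} (hne : u ≠ v)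
    (h : ∀ j ≠ i, u j = v j) : (hypercube d).Adj u v := by
  have hsub : (univ.filter fun j => u j ≠ v j) ⊆ {i} := fun j hj => by
    by_contra hji
    exact (mem_filter.mp hj).2 (h j (by simpa using hji))
  have hnonempty : (univ.filter fun j => u j ≠ v j).Nonempty := by
    obtain ⟨j, hj⟩ := Function.ne_iff.mp hne
    exact ⟨j, by simpa using hj⟩
  exact le_antisymm ((card_le_card hsub).trans (card_singleton i).le) hnonempty.card_pos

lemma hypercube_adj_canonicalPath {d : ℕ} {x y : Fin d → Bool} {k : ℕ}
    (h : canonicalPath x y k ≠ canonicalPath x y (k + 1)) :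
    (hypercube d).Adj (canonicalPath x y k) (canonicalPath x y (k + 1)) := by
  obtain ⟨i, hi⟩ := Function.ne_iff.mp h
  refine hypercube_adj_of_forall_ne_apply_eq (i := i) h fun j hj => ?_
  have hik := val_eq_of_canonicalPath_succ_apply_ne hi
  exact (canonicalPath_succ_apply_of_ne x y (by omega)).symm

def SimpleGraph.edgeBoundary {V : Type*} [Fintype V] (G : SimpleGraph V) [DecidableRel G.Adj]
    [DecidableEq V] (S : Finset V) : Finset (V × V) :=
  univ.filter fun e => G.Adj e.1 e.2 ∧ e.1 ∈ S ∧ e.2 ∉ S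

lemma card_mul_card_compl_le_hypercube_edgeBoundary {d : ℕ} (S : Finset (Fin d → Bool)) :
    #S * #Sᶜ ≤ #((hypercube d).edgeBoundary S) * 2 ^ (d - 1) := by
  set B := (hypercube d).edgeBoundary S
  have hcover : S ×ˢ Sᶜ ⊆ B.biUnion fun e => pathsThrough e.1 e.2 := by
    rintro ⟨x, y⟩ hxy
    rw [mem_product, mem_compl] at hxy
    obtain ⟨k, hkS, hk1S⟩ := exists_canonicalPath_step hxy.1 hxy.2
    have hne : canonicalPath x y k ≠ canonicalPath x y (k + 1) := fun h => hk1S (h ▸ hkS)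
    refine mem_biUnion.mpr ⟨(canonicalPath x y k, canonicalPath x y (k + 1)), ?_,
      mem_filter.mpr ⟨mem_univ _, k, rfl, rfl⟩⟩
    exact mem_filter.mpr ⟨mem_univ _, hypercube_adj_canonicalPath hne, hkS, hk1S⟩
  rw [← card_product]
  calc #(S ×ˢ Sᶜ) ≤ ∑ e ∈ B, #(pathsThrough e.1 e.2) :=
        (card_le_card hcover).trans card_biUnion_le
    _ ≤ #B * 2 ^ (d - 1) := by
        refine sum_le_card_nsmul _ _ _ fun e he => ?_
        obtain ⟨i, hi⟩ := Function.ne_iff.mp (mem_filter.mp he).2.1.ne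
        simpa using card_pathsThrough_le hi

/-- Weak form of Harper's edge-isoperimetric inequality: any subset `S` of the
`d`-dimensional hypercube with `|S| ≤ 2^(d-1)` has edge boundary of size at
least `|S|`. -/
theorem harper_edge_boundary {d : ℕ} (S : Finset (Fin d → Bool))
    (hS : 2 * S.card ≤ 2 ^ d) :
    S.card ≤ (Finset.univ.filter fun e : (Fin d → Bool) × (Fin d → Bool) =>
      (hypercube d).Adj e.1 e.2 ∧ e.1 ∈ S ∧ e.2 ∉ S).card := by
  have hcompl : 2 ^ (d - 1) ≤ #Sᶜ := by
    rw [card_compl, Fintype.card_fun, Fintype.card_bool, Fintype.card_fin]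
    cases d <;> simp [pow_succ] at hS ⊢ <;> omega
  have hcount := card_mul_card_compl_le_hypercube_edgeBoundary S
  exact le_of_mul_le_mul_right ((Nat.mul_le_mul_left _ hcompl).trans hcount) (by positivity)
end
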